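/- arXiv:2605.17111 — 2 statements merged into one kernel-verified Lean document; each statement's English description precedes it below -/
import Mathlib

section
/- Assume x_1,…,x_N are i.i.d. with mean zero, population covariance Σ, bounded fourth moments, and V_⊥ + D > 0. Define the sample analogs V̂_⊥ = (1/N²) Σ_{k=1}^N ‖P_G^⊥(x_k x_kᵀ) − P_G^⊥(R̂)‖_F² and V̂_⊥+D = ‖R̂ − R̂_G‖_F², and the plug-in α̂*_MSE = min(1, max(0, V̂_⊥/(V̂_⊥+D))). Then V̂_⊥ → V_⊥ and V̂_⊥+D → V_⊥ + D in probability as N → ∞, and consequently α̂*_MSE → α*_MSE = V_⊥/(V_⊥ + D) in probability as N → ∞. -/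
/-!
Put `Z_k = P_G^⊥(x_k x_kᵀ − Σ)`. The `Z_k` are i.i.d., centred and (by the fourth-moment
assumption) square integrable, and `P_G^⊥(R̂ − Σ) = N⁻¹ ∑_{k<N} Z_k`; summing the variances of
the entries gives `V_⊥ = E‖Z_0‖_F² / N → 0`.
By the strong law of large numbers `R̂ → Σ` almost surely, so `V̂_⊥+D = ‖P_G^⊥ R̂‖_F² → D`.
Also `N⁻¹ ∑_{k<N} ‖P_G^⊥(x_k x_kᵀ)‖_F²` converges almost surely, and
`V̂_⊥ ≤ (2/N) (N⁻¹ ∑_{k<N} ‖P_G^⊥(x_k x_kᵀ)‖_F² + ‖P_G^⊥ R̂‖_F²)`, so `V̂_⊥ → 0` almost surely.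
Since `D > 0`, also `α̂*_MSE → 0` almost surely and `α*_MSE → 0`. Almost sure convergence implies
convergence in probability.
-/

open MeasureTheory ProbabilityTheory Matrix Filter

noncomputable section

/-- Squared Frobenius norm of a real matrix. -/
def frobSq {M : ℕ} (A : Matrix (Fin M) (Fin M) ℝ) : ℝ := ∑ i, ∑ j, (A i j) ^ 2

/-- Reynolds projection `P_G(A) = |G|⁻¹ ∑_g ρ(g) A ρ(g)ᵀ`. -/
def reynolds {M : ℕ} {G : Type*} [Fintype G] (ρ : G → Matrix (Fin M) (Fin M) ℝ)
    (A : Matrix (Fin M) (Fin M) ℝ) : Matrix (Fin M) (Fin M) ℝ :=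
  (Fintype.card G : ℝ)⁻¹ • ∑ g : G, ρ g * A * (ρ g)ᵀ

/-- Sample covariance `R̂ = N⁻¹ ∑_{n<N} xₙ xₙᵀ` built from the first `N` observations. -/
def sampleCovN {M : ℕ} {Ω : Type*} (x : ℕ → Ω → Fin M → ℝ) (N : ℕ) (ω : Ω) :
    Matrix (Fin M) (Fin M) ℝ :=
  (N : ℝ)⁻¹ • ∑ n ∈ Finset.range N, vecMulVec (x n ω) (x n ω)

open Topology

section Frobenius

variable {M : ℕ}

lemma frobSq_nonneg (A : Matrix (Fin M) (Fin M) ℝ) : 0 ≤ frobSq A := by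
  unfold frobSq
  positivity

lemma frobSq_neg (A : Matrix (Fin M) (Fin M) ℝ) : frobSq (-A) = frobSq A := by
  simp [frobSq]

lemma frobSq_smul (c : ℝ) (A : Matrix (Fin M) (Fin M) ℝ) : frobSq (c • A) = c ^ 2 * frobSq A := by
  simp [frobSq, Finset.mul_sum, mul_pow]

lemma frobSq_sub_le (A B : Matrix (Fin M) (Fin M) ℝ) :
    frobSq (A - B) ≤ 2 * frobSq A + 2 * frobSq B := by
  simp only [frobSq, Finset.mul_sum, ← Finset.sum_add_distrib]
  gcongr with i _ j _
  simp only [Matrix.sub_apply]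
  nlinarith [sq_nonneg (A i j + B i j)]

lemma continuous_frobSq : Continuous (frobSq (M := M)) := by
  unfold frobSq
  fun_prop

variable {Ω : Type*} [MeasurableSpace Ω] {μ : Measure Ω} {A : Ω → Matrix (Fin M) (Fin M) ℝ}

lemma integrable_frobSq (hA : ∀ i j, MemLp (fun ω => A ω i j) 2 μ) :
    Integrable (fun ω => frobSq (A ω)) μ :=
  integrable_finsetSum _ fun i _ => integrable_finsetSum _ fun j _ => (hA i j).integrable_sq

lemma integral_frobSq (hA : ∀ i j, MemLp (fun ω => A ω i j) 2 μ) :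
    ∫ ω, frobSq (A ω) ∂μ = ∑ i, ∑ j, ∫ ω, A ω i j ^ 2 ∂μ := by
  unfold frobSq
  rw [integral_finsetSum _ fun i _ => integrable_finsetSum _ fun j _ => (hA i j).integrable_sq]
  exact Finset.sum_congr rfl fun i _ =>
    integral_finsetSum _ fun j _ => (hA i j).integrable_sq

end Frobenius

section Reynolds

variable {M : ℕ} {G : Type*} [Fintype G]

def reynoldsₗ (ρ : G → Matrix (Fin M) (Fin M) ℝ) :
    Matrix (Fin M) (Fin M) ℝ →ₗ[ℝ] Matrix (Fin M) (Fin M) ℝ where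
  toFun := reynolds ρ
  map_add' A B := by
    simp only [reynolds, Matrix.mul_add, Matrix.add_mul, Finset.sum_add_distrib, smul_add]
  map_smul' c A := by
    simp only [reynolds, Matrix.mul_smul, Matrix.smul_mul, ← Finset.smul_sum, RingHom.id_apply]
    rw [smul_comm]

/-- `P_G^⊥ = I - P_G`. -/
def reynoldsCompl (ρ : G → Matrix (Fin M) (Fin M) ℝ) :
    Matrix (Fin M) (Fin M) ℝ →ₗ[ℝ] Matrix (Fin M) (Fin M) ℝ :=
  LinearMap.id - reynoldsₗ ρ

end Reynolds

section RandomMatrix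

variable {m n m' n' : Type*} [Fintype m] [Fintype n] {Ω : Type*} [MeasurableSpace Ω]
  {μ : Measure Ω}

lemma LinearMap.matrix_apply_eq_sum_single [DecidableEq m] [DecidableEq n]
    (L : Matrix m n ℝ →ₗ[ℝ] Matrix m' n' ℝ) (A : Matrix m n ℝ) (i : m') (j : n') :
    L A i j = ∑ a, ∑ b, A a b * L (Matrix.single a b 1) i j := by
  conv_lhs => rw [Matrix.matrix_eq_sum_single A]
  simp only [map_sum, Matrix.sum_apply]
  refine Finset.sum_congr rfl fun a _ => Finset.sum_congr rfl fun b _ => ?_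
  have hsingle : Matrix.single a b (A a b) = A a b • Matrix.single a b (1 : ℝ) := by
    rw [Matrix.smul_single, smul_eq_mul, mul_one]
  rw [hsingle, map_smul]
  rfl

lemma memLp_linearMap_apply (L : Matrix m n ℝ →ₗ[ℝ] Matrix m' n' ℝ) {A : Ω → Matrix m n ℝ}
    {p : ENNReal} (hA : ∀ a b, MemLp (fun ω => A ω a b) p μ) (i : m') (j : n') :
    MemLp (fun ω => L (A ω) i j) p μ := by
  classical
  simp only [L.matrix_apply_eq_sum_single (A _)]
  exact memLp_finsetSum _ fun a _ => memLp_finsetSum _ fun b _ => (hA a b).mul_const _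

lemma integral_linearMap_apply (L : Matrix m n ℝ →ₗ[ℝ] Matrix m' n' ℝ) {A : Ω → Matrix m n ℝ}
    (hA : ∀ a b, Integrable (fun ω => A ω a b) μ) (i : m') (j : n') :
    ∫ ω, L (A ω) i j ∂μ = L (Matrix.of fun a b => ∫ ω, A ω a b ∂μ) i j := by
  classical
  simp only [L.matrix_apply_eq_sum_single (A _), L.matrix_apply_eq_sum_single (Matrix.of _)]
  rw [integral_finsetSum _ fun a _ => integrable_finsetSum _ fun b _ => (hA a b).mul_const _]
  refine Finset.sum_congr rfl fun a _ => ?_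
  rw [integral_finsetSum _ fun b _ => (hA a b).mul_const _]
  simp_rw [integral_mul_const, Matrix.of_apply]

lemma Continuous.measurable_comp_of_entries {f : Matrix m n ℝ → ℝ} (hf : Continuous f)
    {A : Ω → Matrix m n ℝ} (hA : ∀ a b, Measurable fun ω => A ω a b) :
    Measurable fun ω => f (A ω) :=
  (show Continuous fun B : m → n → ℝ => f B from hf).measurable.comp
    (measurable_pi_lambda _ fun a => measurable_pi_lambda _ (hA a))

end RandomMatrix

section IID

variable {Ω E : Type*} [MeasurableSpace Ω] [MeasurableSpace E] {μ : Measure Ω}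
  {X : ℕ → Ω → E} {φ : E → ℝ}

lemma memLp_two_mul_of_memLp_four {f g : Ω → ℝ} (hf : MemLp f 4 μ) (hg : MemLp g 4 μ) :
    MemLp (fun ω => f ω * g ω) 2 μ :=
  have : ENNReal.HolderTriple 4 4 2 := ⟨by
    rw [show (4 : ENNReal) = 2 * 2 by norm_num, ENNReal.mul_inv (by simp) (by simp), ← mul_add,
      ENNReal.inv_two_add_inv_two, mul_one]⟩
  hg.mul' hf

lemma strong_law_ae_comp (hindep : iIndepFun X μ)
    (hident : ∀ n m, IdentDistrib (X n) (X m) μ μ) (hφ : Measurable φ)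
    (hint : Integrable (fun ω => φ (X 0 ω)) μ) :
    ∀ᵐ ω ∂μ, Tendsto (fun N : ℕ => (∑ k ∈ Finset.range N, φ (X k ω)) / N) atTop
      (𝓝 (∫ ω, φ (X 0 ω) ∂μ)) :=
  strong_law_ae_real (fun k ω => φ (X k ω)) hint
    (fun _ _ hkl => (hindep.indepFun hkl).comp hφ hφ) (fun k => (hident k 0).comp hφ)

lemma integral_sq_sum_comp_of_integral_eq_zero [IsFiniteMeasure μ] (hindep : iIndepFun X μ)
    (hident : ∀ n m, IdentDistrib (X n) (X m) μ μ) (hφ : Measurable φ)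
    (hL2 : MemLp (fun ω => φ (X 0 ω)) 2 μ) (hmean : ∫ ω, φ (X 0 ω) ∂μ = 0) (N : ℕ) :
    ∫ ω, (∑ k ∈ Finset.range N, φ (X k ω)) ^ 2 ∂μ = N * ∫ ω, φ (X 0 ω) ^ 2 ∂μ := by
  have hident' : ∀ k, IdentDistrib (fun ω => φ (X k ω)) (fun ω => φ (X 0 ω)) μ μ :=
    fun k => (hident k 0).comp hφ
  have hL2' : ∀ k, MemLp (fun ω => φ (X k ω)) 2 μ := fun k => (hident' k).memLp_iff.2 hL2
  have hsum_mean : ∫ ω, ∑ k ∈ Finset.range N, φ (X k ω) ∂μ = 0 := by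
    rw [integral_finsetSum _ fun k _ => (hL2' k).integrable one_le_two]
    exact Finset.sum_eq_zero fun k _ => (hident' k).integral_eq.trans hmean
  rw [← variance_of_integral_eq_zero (memLp_finsetSum _ fun k _ => hL2' k).aemeasurable
    hsum_mean, ← variance_of_integral_eq_zero hL2.aemeasurable hmean]
  rw [← Finset.sum_fn, IndepFun.variance_sum (fun k _ => hL2' k)
    (fun k _ l _ hkl => (hindep.indepFun hkl).comp hφ hφ)]
  simp [(hident' _).variance_eq]

end IID

section SampleCovariance

variable {M : ℕ} {Ω : Type*} {x : ℕ → Ω → Fin M → ℝ} {Sg : Matrix (Fin M) (Fin M) ℝ}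

lemma sampleCovN_zero (ω : Ω) : sampleCovN x 0 ω = 0 := by
  simp [sampleCovN]

lemma sampleCovN_apply (N : ℕ) (ω : Ω) (i j : Fin M) :
    sampleCovN x N ω i j = (∑ k ∈ Finset.range N, x k ω i * x k ω j) / N := by
  simp [sampleCovN, Matrix.sum_apply, vecMulVec_apply, div_eq_inv_mul]

lemma sampleCovN_sub_eq_smul_sum {N : ℕ} (hN : N ≠ 0) (ω : Ω) :
    sampleCovN x N ω - Sg =
      (N : ℝ)⁻¹ • ∑ k ∈ Finset.range N, (vecMulVec (x k ω) (x k ω) - Sg) := by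
  rw [Finset.sum_sub_distrib, Finset.sum_const, Finset.card_range, smul_sub, sampleCovN,
    ← Nat.cast_smul_eq_nsmul ℝ, smul_smul, inv_mul_cancel₀ (Nat.cast_ne_zero.2 hN), one_smul]

variable [MeasurableSpace Ω] {μ : Measure Ω}

lemma measurable_sampleCovN_apply (hmeas : ∀ n i, Measurable fun ω => x n ω i) (N : ℕ)
    (i j : Fin M) : Measurable fun ω => sampleCovN x N ω i j := by
  simp_rw [sampleCovN_apply]
  exact (Finset.measurable_sum _ fun k _ => (hmeas k i).mul (hmeas k j)).div_const _

lemma ae_tendsto_sampleCovN (hindep : iIndepFun x μ)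
    (hident : ∀ n m, IdentDistrib (x n) (x m) μ μ) (h2 : ∀ i, MemLp (fun ω => x 0 ω i) 2 μ)
    (hcov : ∀ i j, ∫ ω, x 0 ω i * x 0 ω j ∂μ = Sg i j) :
    ∀ᵐ ω ∂μ, Tendsto (fun N => sampleCovN x N ω) atTop (𝓝 Sg) := by
  have hentry : ∀ i j, ∀ᵐ ω ∂μ, Tendsto (fun N => sampleCovN x N ω i j) atTop (𝓝 (Sg i j)) :=
    fun i j => by
      simpa only [sampleCovN_apply, hcov] using strong_law_ae_comp hindep hident
        (φ := fun v => v i * v j) (by fun_prop) ((h2 i).integrable_mul (h2 j))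
  filter_upwards [ae_all_iff.2 fun i => ae_all_iff.2 (hentry i)] with ω hω
  exact tendsto_pi_nhds.2 fun i => tendsto_pi_nhds.2 (hω i)

lemma integral_linearMap_vecMulVec_sub_apply [IsProbabilityMeasure μ]
    (L : Matrix (Fin M) (Fin M) ℝ →ₗ[ℝ] Matrix (Fin M) (Fin M) ℝ) {X : Ω → Fin M → ℝ}
    (hprod : ∀ a b, Integrable (fun ω => X ω a * X ω b) μ)
    (hcov : ∀ a b, ∫ ω, X ω a * X ω b ∂μ = Sg a b) (i j : Fin M) :
    ∫ ω, L (vecMulVec (X ω) (X ω) - Sg) i j ∂μ = 0 := by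
  have hcentred : Matrix.of (fun a b => ∫ ω, (vecMulVec (X ω) (X ω) - Sg) a b ∂μ) = 0 := by
    ext a b
    simp only [Matrix.sub_apply, vecMulVec_apply, Matrix.of_apply, Matrix.zero_apply]
    rw [integral_sub (hprod a b) (integrable_const _), hcov]
    simp
  rw [integral_linearMap_apply L (A := fun ω => vecMulVec (X ω) (X ω) - Sg)
    fun a b => (hprod a b).sub (integrable_const _), hcentred, map_zero]
  rfl

lemma integral_frobSq_linearMap_sampleCovN_sub [IsProbabilityMeasure μ]
    (L : Matrix (Fin M) (Fin M) ℝ →ₗ[ℝ] Matrix (Fin M) (Fin M) ℝ) (hindep : iIndepFun x μ)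
    (hident : ∀ n m, IdentDistrib (x n) (x m) μ μ) (h4 : ∀ i, MemLp (fun ω => x 0 ω i) 4 μ)
    (hcov : ∀ i j, ∫ ω, x 0 ω i * x 0 ω j ∂μ = Sg i j) {N : ℕ} (hN : N ≠ 0) :
    ∫ ω, frobSq (L (sampleCovN x N ω - Sg)) ∂μ =
      (∫ ω, frobSq (L (vecMulVec (x 0 ω) (x 0 ω) - Sg)) ∂μ) / N := by
  set φ : Fin M → Fin M → (Fin M → ℝ) → ℝ := fun i j v => L (vecMulVec v v - Sg) i j
  have hφ : ∀ i j, Measurable (φ i j) := fun i j => by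
    have := L.continuous_of_finiteDimensional
    fun_prop
  have hprod : ∀ a b, MemLp (fun ω => x 0 ω a * x 0 ω b) 2 μ :=
    fun a b => memLp_two_mul_of_memLp_four (h4 a) (h4 b)
  have hZ0 : ∀ a b, MemLp (fun ω => (vecMulVec (x 0 ω) (x 0 ω) - Sg) a b) 2 μ :=
    fun a b => (hprod a b).sub (memLp_const _)
  have hL2 : ∀ i j, MemLp (fun ω => φ i j (x 0 ω)) 2 μ := memLp_linearMap_apply L hZ0
  have hmean : ∀ i j, ∫ ω, φ i j (x 0 ω) ∂μ = 0 :=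
    integral_linearMap_vecMulVec_sub_apply L (fun a b => (hprod a b).integrable one_le_two) hcov
  have hS : ∀ i j, MemLp
      (fun ω => (∑ k ∈ Finset.range N, L (vecMulVec (x k ω) (x k ω) - Sg)) i j) 2 μ :=
    fun i j => by
      simp only [Matrix.sum_apply]
      exact memLp_finsetSum _ fun k _ => ((hident k 0).comp (hφ i j)).memLp_iff.2 (hL2 i j)
  calc ∫ ω, frobSq (L (sampleCovN x N ω - Sg)) ∂μ
      = ((N : ℝ)⁻¹) ^ 2 *
          ∫ ω, frobSq (∑ k ∈ Finset.range N, L (vecMulVec (x k ω) (x k ω) - Sg)) ∂μ := by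
        rw [← integral_const_mul]
        refine integral_congr_ae (ae_of_all _ fun ω => ?_)
        simp only [sampleCovN_sub_eq_smul_sum hN, map_smul, frobSq_smul, map_sum]
    _ = ((N : ℝ)⁻¹) ^ 2 * ∑ i, ∑ j, N * ∫ ω, φ i j (x 0 ω) ^ 2 ∂μ := by
        rw [integral_frobSq hS]
        simp only [Matrix.sum_apply]
        congr! 3 with i _ j _
        exact integral_sq_sum_comp_of_integral_eq_zero hindep hident (hφ i j) (hL2 i j)
          (hmean i j) N
    _ = _ := by
        rw [integral_frobSq (memLp_linearMap_apply L hZ0)]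
        simp only [φ, ← Finset.mul_sum]
        field_simp

lemma tendsto_integral_frobSq_linearMap_sampleCovN_sub [IsProbabilityMeasure μ]
    (L : Matrix (Fin M) (Fin M) ℝ →ₗ[ℝ] Matrix (Fin M) (Fin M) ℝ) (hindep : iIndepFun x μ)
    (hident : ∀ n m, IdentDistrib (x n) (x m) μ μ) (h4 : ∀ i, MemLp (fun ω => x 0 ω i) 4 μ)
    (hcov : ∀ i j, ∫ ω, x 0 ω i * x 0 ω j ∂μ = Sg i j) :
    Tendsto (fun N => ∫ ω, frobSq (L (sampleCovN x N ω - Sg)) ∂μ) atTop (𝓝 0) :=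
  (tendsto_const_div_atTop_nhds_zero_nat _).congr' <| (eventually_ne_atTop 0).mono fun _ hN =>
    (integral_frobSq_linearMap_sampleCovN_sub L hindep hident h4 hcov hN).symm

end SampleCovariance

section Estimator

variable {M : ℕ} {Ω : Type*} [MeasurableSpace Ω] {μ : Measure Ω} {x : ℕ → Ω → Fin M → ℝ}
  {Sg : Matrix (Fin M) (Fin M) ℝ}

/-- `V̂_⊥ = N⁻² ∑_{k<N} ‖L(x_k x_kᵀ) − L(R̂)‖_F²` for `L = P_G^⊥`. -/
def projVarEstimate (L : Matrix (Fin M) (Fin M) ℝ →ₗ[ℝ] Matrix (Fin M) (Fin M) ℝ)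
    (x : ℕ → Ω → Fin M → ℝ) (N : ℕ) (ω : Ω) : ℝ :=
  ((N : ℝ) ^ 2)⁻¹ * ∑ k ∈ Finset.range N,
    frobSq (L (vecMulVec (x k ω) (x k ω)) - L (sampleCovN x N ω))

lemma measurable_projVarEstimate (L : Matrix (Fin M) (Fin M) ℝ →ₗ[ℝ] Matrix (Fin M) (Fin M) ℝ)
    (hmeas : ∀ n i, Measurable fun ω => x n ω i) (N : ℕ) :
    Measurable (projVarEstimate L x N) := by
  unfold projVarEstimate
  refine (Finset.measurable_sum _ fun k _ => ?_).const_mul _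
  simp_rw [← map_sub]
  exact (continuous_frobSq.comp L.continuous_of_finiteDimensional).measurable_comp_of_entries
    fun a b => ((hmeas k a).mul (hmeas k b)).sub (measurable_sampleCovN_apply hmeas N a b)

lemma measurable_frobSq_linearMap_sampleCovN
    (L : Matrix (Fin M) (Fin M) ℝ →ₗ[ℝ] Matrix (Fin M) (Fin M) ℝ)
    (hmeas : ∀ n i, Measurable fun ω => x n ω i) (N : ℕ) :
    Measurable fun ω => frobSq (L (sampleCovN x N ω)) :=
  (continuous_frobSq.comp L.continuous_of_finiteDimensional).measurable_comp_of_entries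
    (measurable_sampleCovN_apply hmeas N)

lemma tendsto_inv_sq_mul_sum_frobSq_sub {a b : ℕ → Matrix (Fin M) (Fin M) ℝ} {c d : ℝ}
    (ha : Tendsto (fun N : ℕ => (∑ k ∈ Finset.range N, frobSq (a k)) / N) atTop (𝓝 c))
    (hb : Tendsto (fun N => frobSq (b N)) atTop (𝓝 d)) :
    Tendsto (fun N : ℕ => ((N : ℝ) ^ 2)⁻¹ * ∑ k ∈ Finset.range N, frobSq (a k - b N)) atTop
      (𝓝 0) := by
  have hbound : ∀ N : ℕ, ((N : ℝ) ^ 2)⁻¹ * ∑ k ∈ Finset.range N, frobSq (a k - b N) ≤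
      (N : ℝ)⁻¹ * (2 * ((∑ k ∈ Finset.range N, frobSq (a k)) / N) + 2 * frobSq (b N)) := by
    intro N
    rcases Nat.eq_zero_or_pos N with rfl | hN
    · simp
    calc ((N : ℝ) ^ 2)⁻¹ * ∑ k ∈ Finset.range N, frobSq (a k - b N)
        ≤ ((N : ℝ) ^ 2)⁻¹ * ∑ k ∈ Finset.range N, (2 * frobSq (a k) + 2 * frobSq (b N)) := by
          gcongr with k
          exact frobSq_sub_le _ _
      _ = _ := by
          rw [Finset.sum_add_distrib, ← Finset.mul_sum, Finset.sum_const, Finset.card_range,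
            nsmul_eq_mul]
          field_simp
  have hlim : Tendsto (fun N : ℕ =>
      (N : ℝ)⁻¹ * (2 * ((∑ k ∈ Finset.range N, frobSq (a k)) / N) + 2 * frobSq (b N))) atTop
      (𝓝 0) := by
    simpa using tendsto_inv_atTop_nhds_zero_nat.mul ((ha.const_mul 2).add (hb.const_mul 2))
  refine tendsto_of_tendsto_of_tendsto_of_le_of_le tendsto_const_nhds hlim (fun N => ?_) hbound
  exact mul_nonneg (by positivity) (Finset.sum_nonneg fun k _ => frobSq_nonneg _)

lemma ae_tendsto_frobSq_linearMap_sampleCovN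
    (L : Matrix (Fin M) (Fin M) ℝ →ₗ[ℝ] Matrix (Fin M) (Fin M) ℝ) (hindep : iIndepFun x μ)
    (hident : ∀ n m, IdentDistrib (x n) (x m) μ μ) (h2 : ∀ i, MemLp (fun ω => x 0 ω i) 2 μ)
    (hcov : ∀ i j, ∫ ω, x 0 ω i * x 0 ω j ∂μ = Sg i j) :
    ∀ᵐ ω ∂μ, Tendsto (fun N => frobSq (L (sampleCovN x N ω))) atTop (𝓝 (frobSq (L Sg))) := by
  filter_upwards [ae_tendsto_sampleCovN hindep hident h2 hcov] with ω hω
  exact ((continuous_frobSq.comp L.continuous_of_finiteDimensional).tendsto Sg).comp hω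

lemma ae_tendsto_projVarEstimate [IsFiniteMeasure μ]
    (L : Matrix (Fin M) (Fin M) ℝ →ₗ[ℝ] Matrix (Fin M) (Fin M) ℝ) (hindep : iIndepFun x μ)
    (hident : ∀ n m, IdentDistrib (x n) (x m) μ μ) (h4 : ∀ i, MemLp (fun ω => x 0 ω i) 4 μ)
    (hcov : ∀ i j, ∫ ω, x 0 ω i * x 0 ω j ∂μ = Sg i j) :
    ∀ᵐ ω ∂μ, Tendsto (fun N => projVarEstimate L x N ω) atTop (𝓝 0) := by
  have hφ : Measurable fun v : Fin M → ℝ => frobSq (L (vecMulVec v v)) :=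
    (continuous_frobSq.comp (L.continuous_of_finiteDimensional.comp
      (continuous_id.matrix_vecMulVec continuous_id))).measurable
  have hint : Integrable (fun ω => frobSq (L (vecMulVec (x 0 ω) (x 0 ω)))) μ :=
    integrable_frobSq <|
      memLp_linearMap_apply L fun a b => memLp_two_mul_of_memLp_four (h4 a) (h4 b)
  filter_upwards [strong_law_ae_comp hindep hident hφ hint,
    ae_tendsto_frobSq_linearMap_sampleCovN L hindep hident
      (fun i => (h4 i).mono_exponent (by norm_num)) hcov] with ω hW hR
  exact tendsto_inv_sq_mul_sum_frobSq_sub hW hR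

end Estimator

lemma tendstoInMeasure_sub_of_ae_tendsto {Ω : Type*} [MeasurableSpace Ω] {μ : Measure Ω}
    [IsFiniteMeasure μ] {f : ℕ → Ω → ℝ} {g : ℕ → ℝ} {c : ℝ} (hf : ∀ N, Measurable (f N))
    (hfc : ∀ᵐ ω ∂μ, Tendsto (fun N => f N ω) atTop (𝓝 c)) (hg : Tendsto g atTop (𝓝 c)) :
    TendstoInMeasure μ (fun N ω => f N ω - g N) atTop (fun _ => 0) := by
  refine tendstoInMeasure_of_tendsto_ae
    (fun N => ((hf N).sub measurable_const).aestronglyMeasurable) ?_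
  filter_upwards [hfc] with ω hω
  simpa using hω.sub hg

theorem mse_plugin_consistency_general
    {M : ℕ} {G : Type*} [Fintype G]
    (ρ : G → Matrix (Fin M) (Fin M) ℝ)
    {Ω : Type*} [MeasurableSpace Ω] (μ : Measure Ω) [IsProbabilityMeasure μ]
    (x : ℕ → Ω → Fin M → ℝ)
    (Sg : Matrix (Fin M) (Fin M) ℝ)
    (hmeas : ∀ n i, Measurable fun ω => x n ω i)
    (hindep : iIndepFun x μ)
    (hident : ∀ n m : ℕ, IdentDistrib (x n) (x m) μ μ)
    (hcov : ∀ n i j, ∫ ω, x n ω i * x n ω j ∂μ = Sg i j)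
    (h4 : ∀ n i, MemLp (fun ω => x n ω i) 4 μ)
    (B : Matrix (Fin M) (Fin M) ℝ) (hB : B = Sg - reynolds ρ Sg)
    (D : ℝ) (hD : D = frobSq B)
    (Vperp : ℕ → ℝ)
    (hVperp : ∀ N, Vperp N = ∫ ω,
      frobSq ((sampleCovN x N ω - Sg) - reynolds ρ (sampleCovN x N ω - Sg)) ∂μ)
    (hpos : ∀ N, 0 < Vperp N + D)
    (Vhat : ℕ → Ω → ℝ)
    (hVhat : ∀ N ω, Vhat N ω = ((N : ℝ) ^ 2)⁻¹ * ∑ k ∈ Finset.range N,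
      frobSq ((vecMulVec (x k ω) (x k ω) - reynolds ρ (vecMulVec (x k ω) (x k ω)))
        - (sampleCovN x N ω - reynolds ρ (sampleCovN x N ω))))
    (VDhat : ℕ → Ω → ℝ)
    (hVDhat : ∀ N ω, VDhat N ω = frobSq (sampleCovN x N ω - reynolds ρ (sampleCovN x N ω)))
    (αhat : ℕ → Ω → ℝ)
    (hαhat : ∀ N ω, αhat N ω = min 1 (max 0 (Vhat N ω / VDhat N ω))) :
    TendstoInMeasure μ (fun N ω => Vhat N ω - Vperp N) atTop (fun _ => 0) ∧
    TendstoInMeasure μ (fun N ω => VDhat N ω - (Vperp N + D)) atTop (fun _ => 0) ∧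
    TendstoInMeasure μ (fun N ω => αhat N ω - Vperp N / (Vperp N + D)) atTop (fun _ => 0) := by
  set L := reynoldsCompl ρ
  obtain rfl : Vperp = fun N => ∫ ω, frobSq (L (sampleCovN x N ω - Sg)) ∂μ := funext hVperp
  obtain rfl : Vhat = projVarEstimate L x := funext₂ hVhat
  obtain rfl : VDhat = fun N ω => frobSq (L (sampleCovN x N ω)) := funext₂ hVDhat
  obtain rfl : D = frobSq (L Sg) := hD.trans (congrArg frobSq hB)
  -- `sampleCovN x 0 = 0`, so `hpos 0` is the statement `0 < D`.
  have hDpos : 0 < frobSq (L Sg) := by simpa [sampleCovN_zero, frobSq_neg] using hpos 0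
  have hVperp_lim :=
    tendsto_integral_frobSq_linearMap_sampleCovN_sub L hindep hident (h4 0) (hcov 0)
  have hV := ae_tendsto_projVarEstimate L hindep hident (h4 0) (hcov 0)
  have hVD := ae_tendsto_frobSq_linearMap_sampleCovN L hindep hident
    (fun i => (h4 0 i).mono_exponent (by norm_num)) (hcov 0)
  have hV_meas := measurable_projVarEstimate L hmeas
  have hVD_meas := measurable_frobSq_linearMap_sampleCovN L hmeas
  have hα : ∀ᵐ ω ∂μ, Tendsto (fun N => αhat N ω) atTop (𝓝 0) := by
    filter_upwards [hV, hVD] with ω hVω hVDω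
    simpa [hαhat] using (tendsto_const_nhds (x := (1 : ℝ))).min
      ((tendsto_const_nhds (x := (0 : ℝ))).max (hVω.div hVDω hDpos.ne'))
  refine ⟨tendstoInMeasure_sub_of_ae_tendsto hV_meas hV hVperp_lim,
    tendstoInMeasure_sub_of_ae_tendsto hVD_meas hVD (by simpa using hVperp_lim.add_const _),
    tendstoInMeasure_sub_of_ae_tendsto (fun N => ?_) hα ?_⟩
  · rw [funext (hαhat N)]
    exact measurable_const.min (measurable_const.max ((hV_meas N).div (hVD_meas N)))
  · simpa [Pi.div_def] using hVperp_lim.div (hVperp_lim.add_const _) (by simpa using hDpos.ne')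

/-- **Consistency of the closed-form MSE plug-in.**
For i.i.d. mean-zero observations with population covariance `Sg`, bounded fourth moments and
`V_⊥ + D > 0`, the sample analogs
`V̂_⊥ = N⁻² ∑_k ‖P_G^⊥(x_k x_kᵀ) − P_G^⊥(R̂)‖_F²` and `V̂_⊥+D = ‖R̂ − R̂_G‖_F²`
converge in probability to `V_⊥` and `V_⊥ + D`, and consequently the plug-in
`α̂*_MSE = min(1, max(0, V̂_⊥/(V̂_⊥+D)))` converges in probability to
`α*_MSE = V_⊥/(V_⊥+D)` as `N → ∞`. -/
theorem mse_plugin_consistency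
    {M : ℕ} {G : Type*} [Group G] [Fintype G]
    (ρ : G → Matrix (Fin M) (Fin M) ℝ)
    (hρ1 : ρ 1 = 1) (hρmul : ∀ g h : G, ρ (g * h) = ρ g * ρ h)
    (hρorth : ∀ g : G, ρ g * (ρ g)ᵀ = 1)
    {Ω : Type*} [MeasurableSpace Ω] (μ : Measure Ω) [IsProbabilityMeasure μ]
    (x : ℕ → Ω → Fin M → ℝ)
    (Sg : Matrix (Fin M) (Fin M) ℝ)
    (hmeas : ∀ n i, Measurable fun ω => x n ω i)
    (hindep : iIndepFun x μ)
    (hident : ∀ n m : ℕ, IdentDistrib (x n) (x m) μ μ)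
    (hmean : ∀ n i, ∫ ω, x n ω i ∂μ = 0)
    (hcov : ∀ n i j, ∫ ω, x n ω i * x n ω j ∂μ = Sg i j)
    (h4 : ∀ n i, MemLp (fun ω => x n ω i) 4 μ)
    (B : Matrix (Fin M) (Fin M) ℝ) (hB : B = Sg - reynolds ρ Sg)
    (D : ℝ) (hD : D = frobSq B)
    (Vperp : ℕ → ℝ)
    (hVperp : ∀ N, Vperp N = ∫ ω,
      frobSq ((sampleCovN x N ω - Sg) - reynolds ρ (sampleCovN x N ω - Sg)) ∂μ)
    (hpos : ∀ N, 0 < Vperp N + D)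
    (Vhat : ℕ → Ω → ℝ)
    (hVhat : ∀ N ω, Vhat N ω = ((N : ℝ) ^ 2)⁻¹ * ∑ k ∈ Finset.range N,
      frobSq ((vecMulVec (x k ω) (x k ω) - reynolds ρ (vecMulVec (x k ω) (x k ω)))
        - (sampleCovN x N ω - reynolds ρ (sampleCovN x N ω))))
    (VDhat : ℕ → Ω → ℝ)
    (hVDhat : ∀ N ω, VDhat N ω = frobSq (sampleCovN x N ω - reynolds ρ (sampleCovN x N ω)))
    (αhat : ℕ → Ω → ℝ)
    (hαhat : ∀ N ω, αhat N ω = min 1 (max 0 (Vhat N ω / VDhat N ω))) :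
    TendstoInMeasure μ (fun N ω => Vhat N ω - Vperp N) atTop (fun _ => 0) ∧
    TendstoInMeasure μ (fun N ω => VDhat N ω - (Vperp N + D)) atTop (fun _ => 0) ∧
    TendstoInMeasure μ (fun N ω => αhat N ω - Vperp N / (Vperp N + D)) atTop (fun _ => 0) :=
  mse_plugin_consistency_general ρ μ x Sg hmeas hindep hident hcov h4 B hB D hD Vperp hVperp hpos
    Vhat hVhat VDhat hVDhat αhat hαhat
end
end

section
/- Let Σ be a symmetric positive-definite M×M matrix, B_G = Σ − P_G(Σ), and for α ∈ [0,1] let Σ_α^pop = Σ − α B_G. Define the population negative log-likelihood L_pop(α) = (1/2)(log det Σ_α^pop + tr((Σ_α^pop)⁻¹ Σ)). If B_G ≠ 0, then L_pop is strictly increasing on (0,1], so its unique minimizer on [0,1] is α = 0; if B_G = 0, then L_pop is constant in α on [0,1]. -/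
/-!
Both `Sg` and the Reynolds projection `R = P_G(Sg)` are positive definite, so the pencil
`Sg - α B = (1 - α) Sg + α R` can be simultaneously diagonalised: `Sg = P Pᴴ`, `B = P diag(d) Pᴴ`
with every generalised eigenvalue `dᵢ < 1`. Then
`2 L(α) = log det Sg + ∑ᵢ (log (1 - α dᵢ) + (1 - α dᵢ)⁻¹)`, and each summand has derivative
`α dᵢ² / (1 - α dᵢ)² ≥ 0`, strictly positive for `α > 0` as soon as `dᵢ ≠ 0`, i.e. `B ≠ 0`.
-/

open Matrix

noncomputable section

open Set

namespace Matrix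

variable {n : Type*} [Fintype n] [DecidableEq n]

lemma PosDef.exists_isUnit_eq_mul_conjTranspose {S : Matrix n n ℝ} (hS : S.PosDef) :
    ∃ C : Matrix n n ℝ, IsUnit C ∧ S = C * Cᴴ := by
  open scoped MatrixOrder in
  obtain ⟨C, hC⟩ := CStarAlgebra.nonneg_iff_eq_star_mul_self.mp hS.posSemidef.nonneg
  refine ⟨Cᴴ, ?_, by rw [hC, conjTranspose_conjTranspose, star_eq_conjTranspose]⟩
  exact isUnit_of_mul_isUnit_left (hC ▸ hS.isUnit : IsUnit (Cᴴ * C))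

lemma PosDef.exists_eq_mul_diagonal_mul_conjTranspose {S B : Matrix n n ℝ} (hS : S.PosDef)
    (hB : B.IsHermitian) :
    ∃ (P : Matrix n n ℝ) (d : n → ℝ), IsUnit P ∧ S = P * Pᴴ ∧ B = P * diagonal d * Pᴴ := by
  obtain ⟨C, hC, rfl⟩ := hS.exists_isUnit_eq_mul_conjTranspose
  have hCdet : IsUnit C.det := (isUnit_iff_isUnit_det C).mp hC
  obtain ⟨D, hDB⟩ : ∃ D, D = C⁻¹ * B * C⁻¹ᴴ := ⟨_, rfl⟩
  have hD : D.IsHermitian := hDB ▸ isHermitian_mul_mul_conjTranspose _ hB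
  set U : Matrix n n ℝ := (hD.eigenvectorUnitary : Matrix n n ℝ)
  have hspec : D = U * diagonal hD.eigenvalues * star U := by
    conv_lhs => rw [hD.spectral_theorem]
    simp only [Unitary.conjStarAlgAut_apply]
    rfl
  have hU : U * star U = 1 := Unitary.coe_mul_star_self _
  refine ⟨C * U, hD.eigenvalues, hC.mul (IsUnit.of_mul_eq_one _ hU), ?_, ?_⟩
  · rw [conjTranspose_mul, mul_assoc, ← mul_assoc U, ← star_eq_conjTranspose U, hU, one_mul]
  · calc B = C * D * Cᴴ := by
          rw [hDB, conjTranspose_nonsing_inv, ← mul_assoc, ← mul_assoc, mul_nonsing_inv _ hCdet,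
            one_mul, nonsing_inv_mul_cancel_right _ _ (by rw [det_conjTranspose]; exact hCdet.star)]
      _ = C * U * diagonal hD.eigenvalues * (C * U)ᴴ := by
          conv_lhs => rw [hspec]
          rw [conjTranspose_mul, star_eq_conjTranspose]; simp only [mul_assoc]

lemma mul_conjTranspose_sub_smul_mul_diagonal_mul_conjTranspose (P : Matrix n n ℝ) (d : n → ℝ)
    (α : ℝ) : P * Pᴴ - α • (P * diagonal d * Pᴴ) = P * diagonal (fun i => 1 - α * d i) * Pᴴ := by
  have hdiag : diagonal (fun i => 1 - α * d i) = 1 - α • diagonal d := by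
    rw [← diagonal_one, ← diagonal_smul, ← diagonal_sub]; rfl
  rw [hdiag, mul_sub, sub_mul, mul_one, mul_smul_comm, smul_mul_assoc]

lemma lt_one_of_posDef_mul_conjTranspose_sub {P : Matrix n n ℝ} (hP : IsUnit P) {d : n → ℝ}
    (h : (P * Pᴴ - P * diagonal d * Pᴴ).PosDef) (i : n) : d i < 1 := by
  rw [← one_smul ℝ (P * diagonal d * Pᴴ),
    mul_conjTranspose_sub_smul_mul_diagonal_mul_conjTranspose, ← star_eq_conjTranspose,
    hP.posDef_star_right_conjugate_iff, posDef_diagonal_iff] at h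
  linarith [h i]

variable {R : Type*}

lemma det_mul_diagonal_mul_conjTranspose [CommRing R] [StarRing R] (P : Matrix n n R)
    (e : n → R) : (P * diagonal e * Pᴴ).det = (P * Pᴴ).det * ∏ i, e i := by
  rw [det_mul, det_mul, det_mul, det_diagonal, mul_right_comm]

lemma trace_inv_mul_diagonal_mul_conjTranspose [Field R] [StarRing R] {P : Matrix n n R}
    (hP : IsUnit P) {e : n → R} (he : ∀ i, e i ≠ 0) :
    ((P * diagonal e * Pᴴ)⁻¹ * (P * Pᴴ)).trace = ∑ i, (e i)⁻¹ := by
  have hPdet : IsUnit P.det := (isUnit_iff_isUnit_det P).mp hP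
  have hPHdet : IsUnit Pᴴ.det := by rw [det_conjTranspose]; exact hPdet.star
  have hinv : (diagonal e)⁻¹ = diagonal fun i => (e i)⁻¹ :=
    inv_eq_left_inv (by rw [diagonal_mul_diagonal]; simp [he])
  calc ((P * diagonal e * Pᴴ)⁻¹ * (P * Pᴴ)).trace
      = (Pᴴ⁻¹ * ((diagonal e)⁻¹ * (P⁻¹ * P) * Pᴴ)).trace := by
        simp only [mul_inv_rev, mul_assoc]
    _ = (diagonal fun i => (e i)⁻¹).trace := by
        rw [nonsing_inv_mul _ hPdet, mul_one, hinv, trace_mul_comm, mul_assoc,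
          mul_nonsing_inv _ hPHdet, mul_one]
    _ = ∑ i, (e i)⁻¹ := trace_diagonal _

end Matrix

lemma reynolds_posDef {M : ℕ} {G : Type*} [Fintype G] [Nonempty G]
    {ρ : G → Matrix (Fin M) (Fin M) ℝ} (hρ : ∀ g, IsUnit (ρ g)) {S : Matrix (Fin M) (Fin M) ℝ}
    (hS : S.PosDef) : (reynolds ρ S).PosDef := by
  refine (posDef_sum Finset.univ_nonempty fun g _ => ?_).smul (by positivity)
  simpa [star_eq_conjTranspose, conjTranspose_eq_transpose_of_trivial] using
    (hρ g).posDef_star_right_conjugate_iff.mpr hS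

lemma one_sub_mul_pos {α d : ℝ} (hα : α ∈ Icc (0 : ℝ) 1) (hd : d < 1) : 0 < 1 - α * d := by
  nlinarith [mul_nonneg hα.1 (sub_nonneg.2 hd.le), hα.2]

/-- Contribution of a generalised eigenvalue `d` of the pencil `(Sg, B)` to `2 L(α)`. -/
def nllTerm (d α : ℝ) : ℝ := Real.log (1 - α * d) + (1 - α * d)⁻¹

lemma hasDerivAt_nllTerm {d α : ℝ} (h : 1 - α * d ≠ 0) :
    HasDerivAt (nllTerm d) (α * d ^ 2 / (1 - α * d) ^ 2) α := by
  have hlin : HasDerivAt (fun a : ℝ => 1 - a * d) (-d) α := (hasDerivAt_mul_const d).const_sub 1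
  refine ((hlin.log h).add (hlin.inv h)).congr_deriv ?_
  field_simp
  ring

lemma strictMonoOn_sum_nllTerm {n : Type*} [Fintype n] {d : n → ℝ} (hd : ∀ i, d i < 1)
    (hd0 : d ≠ 0) : StrictMonoOn (fun α => ∑ i, nllTerm (d i) α) (Icc 0 1) := by
  have hderiv : ∀ α ∈ Icc (0 : ℝ) 1, HasDerivAt (fun α => ∑ i, nllTerm (d i) α)
      (∑ i, α * d i ^ 2 / (1 - α * d i) ^ 2) α := fun α hα =>
    HasDerivAt.fun_sum fun i _ => hasDerivAt_nllTerm (one_sub_mul_pos hα (hd i)).ne'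
  refine strictMonoOn_of_deriv_pos (convex_Icc 0 1)
    (fun α hα => (hderiv α hα).continuousAt.continuousWithinAt) fun α hα => ?_
  rw [interior_Icc] at hα
  rw [(hderiv α (Ioo_subset_Icc_self hα)).deriv]
  obtain ⟨i₀, hi₀⟩ := Function.ne_iff.mp hd0
  have hα0 := hα.1
  refine Finset.sum_pos' (fun i _ => by positivity) ⟨i₀, Finset.mem_univ _, ?_⟩
  exact div_pos (mul_pos hα0 (sq_pos_of_ne_zero hi₀))
    (pow_pos (one_sub_mul_pos (Ioo_subset_Icc_self hα) (hd i₀)) 2)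

lemma log_det_add_trace_eq_sum_nllTerm {n : Type*} [Fintype n] [DecidableEq n]
    {S B P : Matrix n n ℝ} {d : n → ℝ} (hP : IsUnit P) (hS : S = P * Pᴴ)
    (hB : B = P * diagonal d * Pᴴ) {α : ℝ} (hα : ∀ i, 0 < 1 - α * d i) :
    Real.log (S - α • B).det + ((S - α • B)⁻¹ * S).trace
      = Real.log S.det + ∑ i, nllTerm (d i) α := by
  have hpencil : S - α • B = P * diagonal (fun i => 1 - α * d i) * Pᴴ := by
    rw [hS, hB, mul_conjTranspose_sub_smul_mul_diagonal_mul_conjTranspose]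
  have hPdet : P.det ≠ 0 := ((isUnit_iff_isUnit_det P).mp hP).ne_zero
  have hSdet : S.det ≠ 0 := by
    rw [hS, det_mul, det_conjTranspose]
    exact mul_ne_zero hPdet (star_ne_zero.mpr hPdet)
  rw [hpencil, det_mul_diagonal_mul_conjTranspose, ← hS, Real.log_mul hSdet
    (Finset.prod_pos fun i _ => hα i).ne', Real.log_prod fun i _ => (hα i).ne', hS,
    trace_inv_mul_diagonal_mul_conjTranspose hP fun i => (hα i).ne', add_assoc,
    ← Finset.sum_add_distrib]
  rfl

theorem population_nll_minimum_general
    {M : ℕ} {G : Type*} [Group G] [Fintype G]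
    (ρ : G → Matrix (Fin M) (Fin M) ℝ)
    (hρorth : ∀ g : G, ρ g * (ρ g)ᵀ = 1)
    (Sg : Matrix (Fin M) (Fin M) ℝ) (hSg : Sg.PosDef)
    (B : Matrix (Fin M) (Fin M) ℝ) (hB : B = Sg - reynolds ρ Sg)
    (L : ℝ → ℝ)
    (hL : L = fun α : ℝ =>
      (1 / 2) * (Real.log (Sg - α • B).det + Matrix.trace ((Sg - α • B)⁻¹ * Sg))) :
    (B ≠ 0 →
      StrictMonoOn L (Set.Ioc (0 : ℝ) 1) ∧
      ∀ α ∈ Set.Icc (0 : ℝ) 1, α ≠ 0 → L 0 < L α) ∧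
    (B = 0 → ∀ α ∈ Set.Icc (0 : ℝ) 1, L α = L 0) := by
  refine ⟨fun hB0 => ?_, by rintro rfl α -; simp [hL]⟩
  have hR : (reynolds ρ Sg).PosDef :=
    reynolds_posDef (fun g => IsUnit.of_mul_eq_one _ (hρorth g)) hSg
  obtain ⟨P, d, hP, hSP, hBP⟩ :=
    hSg.exists_eq_mul_diagonal_mul_conjTranspose (hB ▸ hSg.1.sub hR.1)
  have hd : ∀ i, d i < 1 := lt_one_of_posDef_mul_conjTranspose_sub hP <| by
    rwa [← hSP, ← hBP, hB, sub_sub_cancel]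
  have hd0 : d ≠ 0 := by rintro rfl; simp [hBP] at hB0
  have hLmono : StrictMonoOn L (Icc 0 1) := by
    intro a ha b hb hab
    have hsum := strictMonoOn_sum_nllTerm hd hd0 ha hb hab
    simp only [hL, log_det_add_trace_eq_sum_nllTerm hP hSP hBP fun i => one_sub_mul_pos ha (hd i),
      log_det_add_trace_eq_sum_nllTerm hP hSP hBP fun i => one_sub_mul_pos hb (hd i)]
    linarith
  exact ⟨hLmono.mono Ioc_subset_Icc_self,
    fun α hα hα0 => hLmono (left_mem_Icc.2 zero_le_one) hα (hα.1.lt_of_ne' hα0)⟩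

/-- **Population NLL minimum.**
For a symmetric positive-definite population covariance `Sg`, with `B_G = Sg − P_G(Sg)` and
`Sg_α = Sg − α B_G`, the population negative log-likelihood
`L_pop(α) = ½(log det Sg_α + tr(Sg_α⁻¹ Sg))` is strictly increasing on `(0,1]` when
`B_G ≠ 0`, so its unique minimizer on `[0,1]` is `α = 0`; when `B_G = 0` it is constant in `α`
on `[0,1]`. -/
theorem population_nll_minimum
    {M : ℕ} {G : Type*} [Group G] [Fintype G]
    (ρ : G → Matrix (Fin M) (Fin M) ℝ)
    (hρ1 : ρ 1 = 1) (hρmul : ∀ g h : G, ρ (g * h) = ρ g * ρ h)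
    (hρorth : ∀ g : G, ρ g * (ρ g)ᵀ = 1)
    (Sg : Matrix (Fin M) (Fin M) ℝ) (hSg : Sg.PosDef)
    (B : Matrix (Fin M) (Fin M) ℝ) (hB : B = Sg - reynolds ρ Sg)
    (L : ℝ → ℝ)
    (hL : L = fun α : ℝ =>
      (1 / 2) * (Real.log (Sg - α • B).det + Matrix.trace ((Sg - α • B)⁻¹ * Sg))) :
    (B ≠ 0 →
      StrictMonoOn L (Set.Ioc (0 : ℝ) 1) ∧
      ∀ α ∈ Set.Icc (0 : ℝ) 1, α ≠ 0 → L 0 < L α) ∧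
    (B = 0 → ∀ α ∈ Set.Icc (0 : ℝ) 1, L α = L 0) :=
  population_nll_minimum_general ρ hρorth Sg hSg B hB L hL

end
end
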